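/- Let Φ ⊆ 𝒳 be nonempty and let ε > 0. If the obfuscation mechanism f satisfies ε-DP on Φ, then for every observed pseudo-location x' ∈ 𝒳, PivEr(Φ,x') ≥ e^{−ε} · E(Φ). -/

import Mathlib

/-!
Write `w` for the prior and `w'` for the posterior, both renormalised on `Φ`. The posterior
normaliser on `Φ` is `∑_{y ∈ Φ} π(y) f(x'|y) ≤ e^ε f(x'|x) ∑_{y ∈ Φ} π(y)` by `ε`-DP, hence
`w'(x) ≥ e^{-ε} w(x)` pointwise on `Φ`. Since distances are nonnegative, every weighted error
`∑ w'(x) d(x̂, x)` is at least `e^{-ε} ∑ w(x) d(x̂, x)`, and the inequality survives taking the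
minimum over the pivot `x̂`.
-/

open Finset

noncomputable section

/-- Points of the Euclidean plane. -/
abbrev Pt : Type := EuclideanSpace ℝ (Fin 2)

namespace Finset

variable {α ι : Type*}

theorem mul_inf'_sum_mul_le_inf'_sum_mul (s : Finset α) (hs : s.Nonempty) (t : Finset ι)
    (w w' : ι → ℝ) (g : α → ι → ℝ) {c : ℝ} (hc : 0 ≤ c) (hw : ∀ i ∈ t, c * w i ≤ w' i)
    (hg : ∀ a ∈ s, ∀ i ∈ t, 0 ≤ g a i) :
    c * s.inf' hs (fun a => ∑ i ∈ t, w i * g a i) ≤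
      s.inf' hs (fun a => ∑ i ∈ t, w' i * g a i) := by
  refine le_inf' hs _ fun a ha => ?_
  calc c * s.inf' hs (fun a => ∑ i ∈ t, w i * g a i)
      ≤ c * ∑ i ∈ t, w i * g a i := mul_le_mul_of_nonneg_left (inf'_le _ ha) hc
    _ = ∑ i ∈ t, c * w i * g a i := by rw [mul_sum]; simp only [mul_assoc]
    _ ≤ ∑ i ∈ t, w' i * g a i :=
        sum_le_sum fun i hi => mul_le_mul_of_nonneg_right (hw i hi) (hg a ha i hi)

theorem div_sum_div_const (s : Finset ι) (a : ι → ℝ) {D : ℝ} (hD : D ≠ 0) (x : ι) :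
    a x / D / ∑ y ∈ s, a y / D = a x / ∑ y ∈ s, a y := by
  rw [← sum_div, div_div_div_cancel_right₀ hD]

theorem inv_mul_div_sum_le_mul_div_sum_mul (s : Finset ι) {p q : ι → ℝ} {K : ℝ}
    (hp : ∀ y ∈ s, 0 < p y) (hq : ∀ y ∈ s, 0 < q y) {x : ι} (hx : x ∈ s)
    (hratio : ∀ y ∈ s, q y ≤ K * q x) :
    K⁻¹ * (p x / ∑ y ∈ s, p y) ≤ p x * q x / ∑ y ∈ s, p y * q y := by
  have hs : s.Nonempty := ⟨x, hx⟩
  have hpx := hp x hx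
  have hqx := hq x hx
  -- `hratio x hx` forces `1 ≤ K`
  have hK : 0 < K := by nlinarith [hratio x hx]
  have hP : 0 < ∑ y ∈ s, p y := sum_pos hp hs
  have hS : 0 < ∑ y ∈ s, p y * q y := sum_pos (fun y hy => mul_pos (hp y hy) (hq y hy)) hs
  have hnormaliser : ∑ y ∈ s, p y * q y ≤ K * q x * ∑ y ∈ s, p y := by
    rw [mul_sum]
    exact sum_le_sum fun y hy => by nlinarith [hratio y hy, hp y hy]
  calc K⁻¹ * (p x / ∑ y ∈ s, p y) = p x * q x / (K * q x * ∑ y ∈ s, p y) := by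
        field_simp
    _ ≤ p x * q x / ∑ y ∈ s, p y * q y :=
        div_le_div_of_nonneg_left (mul_pos hpx hqx).le hS hnormaliser

end Finset

theorem stmt3_general
    (X : Finset Pt)
    (pr : Pt → ℝ) (hprpos : ∀ x ∈ X, 0 < pr x)
    (f : Pt → Pt → ℝ)  -- `f x' x` denotes f(x' | x)
    (hfpos : ∀ x ∈ X, ∀ x' ∈ X, 0 < f x' x)
    (Φ : Finset Pt) (hΦ : Φ.Nonempty) (hΦX : Φ ⊆ X)
    (ε : ℝ)
    (hDP : ∀ x ∈ Φ, ∀ y ∈ Φ, ∀ x' ∈ X, f x' x ≤ Real.exp ε * f x' y)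
    (x' : Pt) (hx' : x' ∈ X)
    (post : Pt → ℝ)  -- `post x` denotes the posterior Pr(x | x')
    (hpost : ∀ x, post x = pr x * f x' x / ∑ y ∈ X, pr y * f x' y)
    :
    Real.exp (-ε) * Φ.inf' hΦ (fun xh => ∑ x ∈ Φ, (pr x / ∑ y ∈ Φ, pr y) * dist xh x) ≤
      Φ.inf' hΦ (fun xh => ∑ x ∈ Φ, (post x / ∑ y ∈ Φ, post y) * dist xh x) := by
  have hevidence : ∑ y ∈ X, pr y * f x' y ≠ 0 :=
    (sum_pos (fun y hy => mul_pos (hprpos y hy) (hfpos y hy x' hx')) (hΦ.mono hΦX)).ne'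
  have hposterior (x : Pt) :
      post x / ∑ y ∈ Φ, post y = pr x * f x' x / ∑ y ∈ Φ, pr y * f x' y := by
    simp only [hpost]
    exact div_sum_div_const Φ (fun y => pr y * f x' y) hevidence x
  simp only [hposterior]
  refine mul_inf'_sum_mul_le_inf'_sum_mul Φ hΦ Φ _ _ _ (Real.exp_pos _).le (fun x hx => ?_)
    fun _ _ _ _ => dist_nonneg
  rw [Real.exp_neg]
  exact inv_mul_div_sum_le_mul_div_sum_mul Φ (fun y hy => hprpos y (hΦX hy))
    (fun y hy => hfpos y (hΦX hy) x' hx') hx fun y hy => hDP y hy x hx x' hx'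

/-- if `f` satisfies `ε`-DP on a nonempty `Φ ⊆ X`, then for every observed `x'`,
`PivEr(Φ, x') ≥ e^{-ε} · E(Φ)` (both minima being taken over `Φ`). -/
theorem stmt3
    (X : Finset Pt) (hX : X.Nonempty)
    (pr : Pt → ℝ) (hprpos : ∀ x ∈ X, 0 < pr x) (hprsum : ∑ x ∈ X, pr x = 1)
    (f : Pt → Pt → ℝ)  -- `f x' x` denotes f(x' | x)
    (hfpos : ∀ x ∈ X, ∀ x' ∈ X, 0 < f x' x)
    (hfsum : ∀ x ∈ X, ∑ x' ∈ X, f x' x = 1)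
    (Φ : Finset Pt) (hΦ : Φ.Nonempty) (hΦX : Φ ⊆ X)
    (ε : ℝ) (hε : 0 < ε)
    (hDP : ∀ x ∈ Φ, ∀ y ∈ Φ, ∀ x' ∈ X, f x' x ≤ Real.exp ε * f x' y)
    (x' : Pt) (hx' : x' ∈ X)
    (post : Pt → ℝ)  -- `post x` denotes the posterior Pr(x | x')
    (hpost : ∀ x, post x = pr x * f x' x / ∑ y ∈ X, pr y * f x' y)
    :
    Real.exp (-ε) * Φ.inf' hΦ (fun xh => ∑ x ∈ Φ, (pr x / ∑ y ∈ Φ, pr y) * dist xh x) ≤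
      Φ.inf' hΦ (fun xh => ∑ x ∈ Φ, (post x / ∑ y ∈ Φ, post y) * dist xh x) :=
  stmt3_general X pr hprpos f hfpos Φ hΦ hΦX ε hDP x' hx' post hpost
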